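/- For every high-multiplicity scheduling instance on identical machines the following three claims hold: there exists a schedule x* minimizing Cmax such that for every machine i, ∑_j p j · n j ≤ m·(L x* i) + m·pmax and m·(L x* i) ≤ ∑_j p j · n j + m·pmax; there exists a schedule x* maximizing Cmin with the same property; and there exists a schedule x* minimizing Cenvy with the same property. (Equivalently, in each case every machine load lies within pmax of the average load (∑_j p j · n j)/m.) -/

import Mathlib

/-- A schedule assigns `x i j` jobs of type `j` to machine `i`, placing all `n j` jobs. -/
def IsSchedule {m d : ℕ} (n : Fin d → ℕ) (x : Fin m → Fin d → ℕ) : Prop :=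
  ∀ j, ∑ i, x i j = n j

/-- The load of machine `i` under schedule `x`. -/
def load {m d : ℕ} (p : Fin d → ℕ) (x : Fin m → Fin d → ℕ) (i : Fin m) : ℕ :=
  ∑ j, x i j * p j

/-- The makespan: the maximum machine load. -/
def Cmax {m d : ℕ} (p : Fin d → ℕ) (x : Fin m → Fin d → ℕ) : ℕ :=
  Finset.univ.sup (load p x)

/-- The minimum machine load. -/
noncomputable def Cmin {m d : ℕ} (p : Fin d → ℕ) (x : Fin m → Fin d → ℕ) : ℕ :=
  sInf (Set.range (load p x))

/-- The envy value: maximum load minus minimum load. -/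
noncomputable def Cenvy {m d : ℕ} (p : Fin d → ℕ) (x : Fin m → Fin d → ℕ) : ℕ :=
  Cmax p x - Cmin p x
/-!
Call a schedule balanced if `Cmax ≤ Cmin + pmax`. If a schedule is not balanced, moving one job
from a most loaded machine to a least loaded one raises no load above the old maximum and lowers
none below the old minimum, while it strictly decreases the sum of squared loads. Iterating from
an optimal schedule (the set of schedules is finite) therefore yields a balanced schedule that is
still optimal for `Cmax`, for `Cmin` and for `Cenvy`; and in a balanced schedule every load lies
between `Cmin` and `Cmin + pmax`, while the average load lies between `Cmin` and `Cmax`.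
-/

open Finset

section SquareSum

variable {ι : Type*} [Fintype ι] [DecidableEq ι]

theorem sum_sq_add_single (M : ι → ℕ) (c : ι) (q : ℕ) :
    ∑ i, (M i + (Pi.single c q : ι → ℕ) i) ^ 2 = ∑ i, M i ^ 2 + (2 * (M c * q) + q ^ 2) := by
  have hexpand : ∀ i, (M i + (Pi.single c q : ι → ℕ) i) ^ 2 =
      M i ^ 2 + (2 * (M i * (Pi.single c q : ι → ℕ) i) + (Pi.single c q : ι → ℕ) i ^ 2) :=
    fun i => by ring
  rw [sum_congr rfl fun i _ => hexpand i, sum_add_distrib,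
    Fintype.sum_eq_single (f := fun i => _ * (_ * (Pi.single c q : ι → ℕ) i) + _) c
      fun i hi => by simp [hi]]
  simp

theorem sum_sq_add_single_lt (M : ι → ℕ) {a b : ι} {q : ℕ} (hq : 0 < q) (hba : M b < M a) :
    ∑ i, (M i + (Pi.single b q : ι → ℕ) i) ^ 2 < ∑ i, (M i + (Pi.single a q : ι → ℕ) i) ^ 2 := by
  rw [sum_sq_add_single, sum_sq_add_single]
  have : M b * q < M a * q := Nat.mul_lt_mul_of_pos_right hba hq
  omega

end SquareSum

section Schedules

variable {m d : ℕ} {p n : Fin d → ℕ}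

theorem load_add (p : Fin d → ℕ) (x y : Fin m → Fin d → ℕ) :
    load p (x + y) = load p x + load p y := by
  ext i
  simp only [load, Pi.add_apply, add_mul, sum_add_distrib]

theorem load_single_single (p : Fin d → ℕ) (c : Fin m) (j : Fin d) :
    load p (Pi.single c (Pi.single j 1)) = Pi.single c (p j) := by
  ext i
  rcases eq_or_ne i c with rfl | hi
  · simp [load, Pi.single_apply]
  · simp [load, hi]

theorem sum_add_single_apply (y : Fin m → Fin d → ℕ) (c : Fin m) (e : Fin d → ℕ) (j : Fin d) :
    ∑ i, (y + Pi.single c e : Fin m → Fin d → ℕ) i j = ∑ i, y i j + e j := by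
  simp only [Pi.add_apply, sum_add_distrib, add_right_inj]
  rw [Fintype.sum_eq_single c fun i hi => by simp [hi], Pi.single_eq_same]

theorem isSchedule_add_single_iff (y : Fin m → Fin d → ℕ) (a b : Fin m) (e : Fin d → ℕ) :
    IsSchedule n (y + Pi.single a e) ↔ IsSchedule n (y + Pi.single b e) := by
  simp only [IsSchedule, sum_add_single_apply]

theorem exists_eq_add_single_single {x : Fin m → Fin d → ℕ} {a : Fin m} {j : Fin d}
    (h : x a j ≠ 0) : ∃ y : Fin m → Fin d → ℕ, x = y + Pi.single a (Pi.single j 1) := by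
  refine ⟨x - Pi.single a (Pi.single j 1), (tsub_add_cancel_of_le fun i j' => ?_).symm⟩
  rcases eq_or_ne i a with rfl | hi
  · rcases eq_or_ne j' j with rfl | hj'
    · simpa using Nat.one_le_iff_ne_zero.2 h
    · simp [hj']
  · simp [hi]

theorem sum_load (p : Fin d → ℕ) {x : Fin m → Fin d → ℕ} (hx : IsSchedule n x) :
    ∑ i, load p x i = ∑ j, p j * n j := by
  simp only [load]
  rw [sum_comm]
  exact sum_congr rfl fun j _ => by rw [← sum_mul, hx j, mul_comm]

theorem load_le_Cmax (p : Fin d → ℕ) (x : Fin m → Fin d → ℕ) (i : Fin m) :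
    load p x i ≤ Cmax p x :=
  le_sup (mem_univ i)

theorem Cmin_le_load (p : Fin d → ℕ) (x : Fin m → Fin d → ℕ) (i : Fin m) :
    Cmin p x ≤ load p x i :=
  Nat.sInf_le (Set.mem_range_self i)

theorem Cmax_le {x : Fin m → Fin d → ℕ} {c : ℕ} (h : ∀ i, load p x i ≤ c) : Cmax p x ≤ c :=
  Finset.sup_le fun i _ => h i

theorem loads_near_average_of_balanced {x : Fin m → Fin d → ℕ} (hx : IsSchedule n x)
    (hbal : Cmax p x ≤ Cmin p x + univ.sup p) (i : Fin m) :
    ∑ j, p j * n j ≤ m * load p x i + m * univ.sup p ∧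
      m * load p x i ≤ ∑ j, p j * n j + m * univ.sup p := by
  have hupper : ∑ j, p j * n j ≤ m * Cmax p x := by
    simpa [sum_load p hx] using sum_le_card_nsmul univ (load p x) _ fun i _ => load_le_Cmax p x i
  have hlower : m * Cmin p x ≤ ∑ j, p j * n j := by
    simpa [sum_load p hx] using card_nsmul_le_sum univ (load p x) _ fun i _ => Cmin_le_load p x i
  have hbal' : m * Cmax p x ≤ m * Cmin p x + m * univ.sup p := by
    rw [← mul_add]
    exact Nat.mul_le_mul_left m hbal
  have hmin : m * Cmin p x ≤ m * load p x i := Nat.mul_le_mul_left m (Cmin_le_load p x i)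
  have hmax : m * load p x i ≤ m * Cmax p x := Nat.mul_le_mul_left m (load_le_Cmax p x i)
  omega

theorem setOf_isSchedule_finite (n : Fin d → ℕ) :
    {x : Fin m → Fin d → ℕ | IsSchedule n x}.Finite :=
  (Set.finite_Iic fun _ => n).subset fun x hx i j =>
    (hx j).le.trans' <| single_le_sum (f := fun i => x i j) (fun _ _ => Nat.zero_le _) (mem_univ i)

variable [NeZero m]

theorem le_Cmin {x : Fin m → Fin d → ℕ} {c : ℕ} (h : ∀ i, c ≤ load p x i) : c ≤ Cmin p x :=
  le_csInf (Set.range_nonempty _) (Set.forall_mem_range.2 h)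

theorem exists_load_eq_Cmax (p : Fin d → ℕ) (x : Fin m → Fin d → ℕ) :
    ∃ i, load p x i = Cmax p x := by
  obtain ⟨i, -, hi⟩ := exists_mem_eq_sup univ univ_nonempty (load p x)
  exact ⟨i, hi.symm⟩

theorem exists_load_eq_Cmin (p : Fin d → ℕ) (x : Fin m → Fin d → ℕ) :
    ∃ i, load p x i = Cmin p x :=
  Nat.sInf_mem (Set.range_nonempty _)

theorem exists_isSchedule (n : Fin d → ℕ) : ∃ x : Fin m → Fin d → ℕ, IsSchedule n x :=
  ⟨Pi.single 0 n, fun j => by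
    rw [Fintype.sum_eq_single 0 fun i hi => by simp [hi], Pi.single_eq_same]⟩

theorem exists_isSchedule_sum_sq_load_lt {x : Fin m → Fin d → ℕ} (hx : IsSchedule n x)
    (hgap : Cmin p x + univ.sup p < Cmax p x) :
    ∃ x' : Fin m → Fin d → ℕ, IsSchedule n x' ∧ Cmax p x' ≤ Cmax p x ∧ Cmin p x ≤ Cmin p x' ∧
      ∑ i, load p x' i ^ 2 < ∑ i, load p x i ^ 2 := by
  obtain ⟨a, ha⟩ := exists_load_eq_Cmax p x
  obtain ⟨b, hb⟩ := exists_load_eq_Cmin p x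
  have hab : a ≠ b := by
    rintro rfl
    omega
  obtain ⟨j, -, hj⟩ : ∃ j ∈ univ, x a j * p j ≠ 0 :=
    exists_ne_zero_of_sum_ne_zero (show load p x a ≠ 0 by omega)
  obtain ⟨hxj, hpj⟩ := mul_ne_zero_iff.1 hj
  have hpj_le : p j ≤ univ.sup p := le_sup (mem_univ j)
  set e : Fin m → Fin m → Fin d → ℕ := fun c => Pi.single c (Pi.single j 1)
  obtain ⟨y, rfl⟩ : ∃ y, x = y + e a := exists_eq_add_single_single hxj
  have hloads : ∀ c i, load p (y + e c) i = load p y i + (Pi.single c (p j) : Fin m → ℕ) i :=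
    fun c i => by rw [load_add, load_single_single, Pi.add_apply]
  have hCmax : Cmax p (y + e a) = load p y a + p j := by
    rw [← ha, hloads, Pi.single_eq_same]
  have hCmin : Cmin p (y + e a) = load p y b := by
    rw [← hb, hloads, Pi.single_eq_of_ne hab.symm, add_zero]
  have hmove : load p y b < load p y a := by omega
  have hbounds : ∀ i, load p y b ≤ load p (y + e b) i ∧ load p (y + e b) i ≤ load p y a + p j := by
    intro i
    have hmin := Cmin_le_load p (y + e a) i
    have hmax := load_le_Cmax p (y + e a) i
    rw [hCmin, hloads] at hmin
    rw [hCmax, hloads] at hmax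
    rw [hloads]
    rcases eq_or_ne i b with rfl | hib
    · simp only [Pi.single_eq_same]
      omega
    rcases eq_or_ne i a with rfl | hia
    · simp only [Pi.single_eq_of_ne hib]
      omega
    · simp only [Pi.single_eq_of_ne hib, Pi.single_eq_of_ne hia] at hmin hmax ⊢
      omega
  refine ⟨y + e b, (isSchedule_add_single_iff y a b _).1 hx,
    hCmax ▸ Cmax_le fun i => (hbounds i).2, hCmin ▸ le_Cmin fun i => (hbounds i).1, ?_⟩
  simp only [hloads]
  exact sum_sq_add_single_lt _ (Nat.pos_of_ne_zero hpj) hmove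

theorem exists_balanced_isSchedule_le {x₀ : Fin m → Fin d → ℕ} (hx₀ : IsSchedule n x₀) :
    ∃ x : Fin m → Fin d → ℕ, IsSchedule n x ∧ Cmax p x ≤ Cmax p x₀ ∧ Cmin p x₀ ≤ Cmin p x ∧
      Cmax p x ≤ Cmin p x + univ.sup p := by
  induction hk : ∑ i, load p x₀ i ^ 2 using Nat.strong_induction_on generalizing x₀ with
  | _ k ih =>
    by_cases hbal : Cmax p x₀ ≤ Cmin p x₀ + univ.sup p
    · exact ⟨x₀, hx₀, le_rfl, le_rfl, hbal⟩
    obtain ⟨x', hx', hmax', hmin', hlt⟩ := exists_isSchedule_sum_sq_load_lt hx₀ (not_le.1 hbal)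
    obtain ⟨x, hx, hmax, hmin, hbal'⟩ := ih _ (hk ▸ hlt) hx' rfl
    exact ⟨x, hx, hmax.trans hmax', hmin'.trans hmin, hbal'⟩

theorem exists_isSchedule_minimizing (n : Fin d → ℕ) (f : (Fin m → Fin d → ℕ) → ℕ) :
    ∃ x, IsSchedule n x ∧ ∀ y, IsSchedule n y → f x ≤ f y :=
  Set.exists_min_image _ f (setOf_isSchedule_finite n) (exists_isSchedule n)

theorem exists_isSchedule_maximizing (n : Fin d → ℕ) (f : (Fin m → Fin d → ℕ) → ℕ) :
    ∃ x, IsSchedule n x ∧ ∀ y, IsSchedule n y → f y ≤ f x :=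
  Set.exists_max_image _ f (setOf_isSchedule_finite n) (exists_isSchedule n)

end Schedules

theorem exists_optimal_schedules_loads_near_average_general (d m : ℕ) (hm : 1 ≤ m)
    (p : Fin d → ℕ) (n : Fin d → ℕ) :
    (∃ xstar : Fin m → Fin d → ℕ, IsSchedule n xstar ∧
      (∀ x : Fin m → Fin d → ℕ, IsSchedule n x → Cmax p xstar ≤ Cmax p x) ∧
      ∀ i : Fin m,
        (∑ j, p j * n j) ≤ m * load p xstar i + m * Finset.univ.sup p ∧
        m * load p xstar i ≤ (∑ j, p j * n j) + m * Finset.univ.sup p) ∧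
    (∃ xstar : Fin m → Fin d → ℕ, IsSchedule n xstar ∧
      (∀ x : Fin m → Fin d → ℕ, IsSchedule n x → Cmin p x ≤ Cmin p xstar) ∧
      ∀ i : Fin m,
        (∑ j, p j * n j) ≤ m * load p xstar i + m * Finset.univ.sup p ∧
        m * load p xstar i ≤ (∑ j, p j * n j) + m * Finset.univ.sup p) ∧
    (∃ xstar : Fin m → Fin d → ℕ, IsSchedule n xstar ∧
      (∀ x : Fin m → Fin d → ℕ, IsSchedule n x → Cenvy p xstar ≤ Cenvy p x) ∧
      ∀ i : Fin m,
        (∑ j, p j * n j) ≤ m * load p xstar i + m * Finset.univ.sup p ∧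
        m * load p xstar i ≤ (∑ j, p j * n j) + m * Finset.univ.sup p) := by
  have : NeZero m := ⟨by omega⟩
  refine ⟨?_, ?_, ?_⟩
  · obtain ⟨x₀, hx₀, hopt⟩ := exists_isSchedule_minimizing (m := m) n (Cmax p)
    obtain ⟨x, hx, hmax, -, hbal⟩ := exists_balanced_isSchedule_le (p := p) hx₀
    exact ⟨x, hx, fun y hy => hmax.trans (hopt y hy), loads_near_average_of_balanced hx hbal⟩
  · obtain ⟨x₀, hx₀, hopt⟩ := exists_isSchedule_maximizing (m := m) n (Cmin p)
    obtain ⟨x, hx, -, hmin, hbal⟩ := exists_balanced_isSchedule_le (p := p) hx₀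
    exact ⟨x, hx, fun y hy => (hopt y hy).trans hmin, loads_near_average_of_balanced hx hbal⟩
  · obtain ⟨x₀, hx₀, hopt⟩ := exists_isSchedule_minimizing (m := m) n (Cenvy p)
    obtain ⟨x, hx, hmax, hmin, hbal⟩ := exists_balanced_isSchedule_le (p := p) hx₀
    exact ⟨x, hx, fun y hy => (tsub_le_tsub hmax hmin).trans (hopt y hy),
      loads_near_average_of_balanced hx hbal⟩

theorem exists_optimal_schedules_loads_near_average (d m : ℕ) (hd : 1 ≤ d) (hm : 1 ≤ m)
    (p : Fin d → ℕ) (hp : ∀ j, 1 ≤ p j) (n : Fin d → ℕ) :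
    (∃ xstar : Fin m → Fin d → ℕ, IsSchedule n xstar ∧
      (∀ x : Fin m → Fin d → ℕ, IsSchedule n x → Cmax p xstar ≤ Cmax p x) ∧
      ∀ i : Fin m,
        (∑ j, p j * n j) ≤ m * load p xstar i + m * Finset.univ.sup p ∧
        m * load p xstar i ≤ (∑ j, p j * n j) + m * Finset.univ.sup p) ∧
    (∃ xstar : Fin m → Fin d → ℕ, IsSchedule n xstar ∧
      (∀ x : Fin m → Fin d → ℕ, IsSchedule n x → Cmin p x ≤ Cmin p xstar) ∧
      ∀ i : Fin m,
        (∑ j, p j * n j) ≤ m * load p xstar i + m * Finset.univ.sup p ∧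
        m * load p xstar i ≤ (∑ j, p j * n j) + m * Finset.univ.sup p) ∧
    (∃ xstar : Fin m → Fin d → ℕ, IsSchedule n xstar ∧
      (∀ x : Fin m → Fin d → ℕ, IsSchedule n x → Cenvy p xstar ≤ Cenvy p x) ∧
      ∀ i : Fin m,
        (∑ j, p j * n j) ≤ m * load p xstar i + m * Finset.univ.sup p ∧
        m * load p xstar i ≤ (∑ j, p j * n j) + m * Finset.univ.sup p) :=
  exists_optimal_schedules_loads_near_average_general d m hm p n
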